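/- arXiv:2506.21374 — 4 statements merged into one kernel-verified Lean document; each statement's English description precedes it below -/
import Mathlib

section
/- Fix training inputs x_1,…,x_k ∈ ℝ^d and labels y_1,…,y_k ∈ ℝ. Let a_i : ℝ → ℝ and w_i : ℝ → ℝ^d (i = 1,…,n) be differentiable curves solving the gradient-flow equations of the empirical squared loss of the two-layer ReLU network, i.e., for all t ∈ ℝ and all i: a_i'(t) = −(1/k)·Σ_{j=1}^k σ(⟨w_i(t), x_j⟩)·r_j(t) and w_i'(t) = −(1/k)·Σ_{j=1}^k a_i(t)·𝟙{⟨w_i(t), x_j⟩ > 0}·r_j(t)·x_j, where r_j(t) = Σ_{m=1}^n a_m(t)·σ(⟨w_m(t), x_j⟩) − y_j. Then for every i and every t, a_i(t)² − ‖w_i(t)‖² = a_i(0)² − ‖w_i(0)‖². In particular, under balanced initialization a_i(0)² = ‖w_i(0)‖² for all i, one has a_i(t)² = ‖w_i(t)‖² for all i ∈ [n] and all t ≥ 0. -/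
/-! The ReLU is positively homogeneous, `σ(z) = z · 𝟙{z > 0}`, so along the flow
`⟨w_i, w_i'⟩ = a_i a_i'`: both equal `-(a_i/k) Σ_j σ(⟨w_i, x_j⟩) r_j`. Hence
`a_i² - ‖w_i‖²` has zero derivative and is constant. -/

section Balancedness

variable {E : Type*} [NormedAddCommGroup E] [InnerProductSpace ℝ E]

theorem mul_ite_pos_eq_max (z : ℝ) : z * (if 0 < z then 1 else 0) = max z 0 := by
  split_ifs with hz
  · rw [mul_one, max_eq_left hz.le]
  · rw [mul_zero, max_eq_right (not_lt.mp hz)]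

theorem inner_smul_sum_relu_grad_eq {ι : Type*} (s : Finset ι) (v : E) (x : ι → E)
    (c α : ℝ) (r : ι → ℝ) :
    inner ℝ v (c • ∑ j ∈ s, (α * (if (0 : ℝ) < inner ℝ v (x j) then (1 : ℝ) else 0) * r j) • x j)
      = α * (c * ∑ j ∈ s, max (inner ℝ v (x j) : ℝ) 0 * r j) := by
  rw [real_inner_smul_right, inner_sum, Finset.mul_sum, Finset.mul_sum, Finset.mul_sum]
  refine Finset.sum_congr rfl fun j _ => ?_
  rw [real_inner_smul_right, ← mul_ite_pos_eq_max]
  ring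

theorem sq_sub_norm_sq_eq_of_inner_deriv_eq {a a' : ℝ → ℝ} {w w' : ℝ → E}
    (ha : ∀ t, HasDerivAt a (a' t) t) (hw : ∀ t, HasDerivAt w (w' t) t)
    (hbal : ∀ t, inner ℝ (w t) (w' t) = a t * a' t) (t s : ℝ) :
    a t ^ 2 - ‖w t‖ ^ 2 = a s ^ 2 - ‖w s‖ ^ 2 := by
  have hderiv : ∀ t, HasDerivAt (fun t => a t ^ 2 - ‖w t‖ ^ 2) 0 t := fun t => by
    refine (((ha t).fun_pow 2).sub (hw t).norm_sq).congr_deriv ?_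
    rw [hbal]
    push_cast
    ring
  exact is_const_of_deriv_eq_zero (fun t => (hderiv t).differentiableAt)
    (fun t => (hderiv t).deriv) t s

end Balancedness

theorem balancedness_conservation_general (d k n : ℕ)
    (x : Fin k → EuclideanSpace ℝ (Fin d))
    (a : Fin n → ℝ → ℝ) (w : Fin n → ℝ → EuclideanSpace ℝ (Fin d))
    (r : Fin k → ℝ → ℝ)
    (ha : ∀ i t, HasDerivAt (a i)
      (-(1 / (k : ℝ)) * ∑ j, max (inner ℝ (w i t) (x j) : ℝ) 0 * r j t) t)
    (hw : ∀ i t, HasDerivAt (w i)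
      ((-(1 / (k : ℝ))) • ∑ j,
        (a i t * (if (0 : ℝ) < (inner ℝ (w i t) (x j) : ℝ) then (1 : ℝ) else 0) * r j t)
          • x j) t) :
    (∀ i t, (a i t) ^ 2 - ‖w i t‖ ^ 2 = (a i 0) ^ 2 - ‖w i 0‖ ^ 2) ∧
    ((∀ i, (a i 0) ^ 2 = ‖w i 0‖ ^ 2) →
      ∀ i t, 0 ≤ t → (a i t) ^ 2 = ‖w i t‖ ^ 2) := by
  have conserved : ∀ i t, (a i t) ^ 2 - ‖w i t‖ ^ 2 = (a i 0) ^ 2 - ‖w i 0‖ ^ 2 := fun i t =>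
    sq_sub_norm_sq_eq_of_inner_deriv_eq (ha i) (hw i)
      (fun t => inner_smul_sum_relu_grad_eq _ _ _ _ _ _) t 0
  refine ⟨conserved, fun hbal i t _ => ?_⟩
  linarith [conserved i t, hbal i]

/-- Balancedness conservation along the gradient flow of the empirical squared loss of a
two-layer ReLU network: along solutions of the gradient-flow ODEs,
`a i t ^ 2 - ‖w i t‖ ^ 2` is conserved; in particular, under balanced initialization,
`a i t ^ 2 = ‖w i t‖ ^ 2` for all `i` and all `t ≥ 0`. -/
theorem balancedness_conservation (d k n : ℕ) (hd : 1 ≤ d) (hk : 1 ≤ k) (hn : 1 ≤ n)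
    (x : Fin k → EuclideanSpace ℝ (Fin d)) (y : Fin k → ℝ)
    (a : Fin n → ℝ → ℝ) (w : Fin n → ℝ → EuclideanSpace ℝ (Fin d))
    (r : Fin k → ℝ → ℝ)
    (hr : ∀ j t, r j t = (∑ m, a m t * max (inner ℝ (w m t) (x j) : ℝ) 0) - y j)
    (ha : ∀ i t, HasDerivAt (a i)
      (-(1 / (k : ℝ)) * ∑ j, max (inner ℝ (w i t) (x j) : ℝ) 0 * r j t) t)
    (hw : ∀ i t, HasDerivAt (w i)
      ((-(1 / (k : ℝ))) • ∑ j,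
        (a i t * (if (0 : ℝ) < (inner ℝ (w i t) (x j) : ℝ) then (1 : ℝ) else 0) * r j t)
          • x j) t) :
    (∀ i t, (a i t) ^ 2 - ‖w i t‖ ^ 2 = (a i 0) ^ 2 - ‖w i 0‖ ^ 2) ∧
    ((∀ i, (a i 0) ^ 2 = ‖w i 0‖ ^ 2) →
      ∀ i t, 0 ≤ t → (a i t) ^ 2 = ‖w i t‖ ^ 2) :=
  balancedness_conservation_general d k n x a w r ha hw
end

section
/- Let n, p ≥ 1, let f : ℝ^n → ℝ be differentiable, and define F : (ℝ^n)^p → ℝ by F(w_1,…,w_p) = f(θ), where θ ∈ ℝ^n is the entrywise (Hadamard) product with coordinates θ_k = ∏_{l=1}^p w_{l,k}. Then for every layer index l ∈ [p] and coordinate k ∈ [n], the partial derivative of F with respect to the entry w_{l,k} equals (∂f/∂θ_k)(θ) · ∏_{j ≠ l} w_{j,k}. Consequently, for every k and all indices l, m ∈ [p] with |w_{l,k}| ≤ |w_{m,k}|, one has |∂F/∂w_{m,k}(w_1,…,w_p)| ≤ |∂F/∂w_{l,k}(w_1,…,w_p)|; in particular, if |w_{1,k}| ≤ ⋯ ≤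 |w_{p,k}| for all k ∈ [n], then |∂F/∂w_{1,k}| ≥ ⋯ ≥ |∂F/∂w_{p,k}| for all k ∈ [n]. -/
open Finset

/-!
The Hadamard product `θ_k = ∏ l, w_{l,k}` is multilinear, so its partial derivative in the
entry `w_{l,k}` is `∏_{j ≠ l} w_{j,k}` in direction `k`, and the chain rule gives
`∂F/∂w_{l,k} = ∂f/∂θ_k · ∏_{j ≠ l} w_{j,k}`. For layers `l ≠ m` the products `∏_{j ≠ m} w_{j,k}`
and `∏_{j ≠ l} w_{j,k}` share every factor except `w_{l,k}` versus `w_{m,k}`, so the smaller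
entry carries the larger gradient.
-/

section HadamardProduct

variable {𝕜 : Type*} [NontriviallyNormedField 𝕜] {ι κ : Type*} [Fintype ι] [Fintype κ]

def hadamardProd (V : ι → κ → 𝕜) : κ → 𝕜 := fun k => ∏ l, V l k

variable [DecidableEq ι]

theorem hasFDerivAt_hadamardProd (W : ι → κ → 𝕜) :
    HasFDerivAt hadamardProd
      (ContinuousLinearMap.pi fun k => ∑ l, (∏ j ∈ univ.erase l, W j k) •
        (ContinuousLinearMap.proj k ∘L ContinuousLinearMap.proj l : (ι → κ → 𝕜) →L[𝕜] 𝕜)) W :=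
  hasFDerivAt_pi.2 fun k =>
    HasFDerivAt.finsetProd fun l _ =>
      (hasFDerivAt_apply (𝕜 := 𝕜) k (W l)).comp (f := fun V : ι → κ → 𝕜 => V l) W
        (hasFDerivAt_apply l W)

variable [DecidableEq κ]

theorem fderiv_hadamardProd_single (W : ι → κ → 𝕜) (l : ι) (k : κ) :
    fderiv 𝕜 hadamardProd W (Pi.single l (Pi.single k 1)) =
      (∏ j ∈ univ.erase l, W j k) • Pi.single k 1 := by
  rw [(hasFDerivAt_hadamardProd W).fderiv]
  ext k'
  rcases eq_or_ne k' k with rfl | hk <;>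
    simp [Pi.single_apply, apply_ite (fun v : κ → 𝕜 => v k'), *]

theorem fderiv_comp_hadamardProd_single {E : Type*} [NormedAddCommGroup E] [NormedSpace 𝕜 E]
    {f : (κ → 𝕜) → E} {W : ι → κ → 𝕜} (hf : DifferentiableAt 𝕜 f (hadamardProd W))
    (l : ι) (k : κ) :
    fderiv 𝕜 (f ∘ hadamardProd) W (Pi.single l (Pi.single k 1)) =
      (∏ j ∈ univ.erase l, W j k) • fderiv 𝕜 f (hadamardProd W) (Pi.single k 1) := by
  rw [fderiv_comp W hf (hasFDerivAt_hadamardProd W).differentiableAt,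
    ContinuousLinearMap.comp_apply, fderiv_hadamardProd_single, map_smul]

end HadamardProduct

theorem abs_prod_erase_le_of_abs_le {ι R : Type*} [DecidableEq ι] [CommRing R] [LinearOrder R]
    [IsStrictOrderedRing R] {s : Finset ι} (x : ι → R) {l m : ι} (hl : l ∈ s) (hm : m ∈ s)
    (h : |x l| ≤ |x m|) :
    |∏ j ∈ s.erase m, x j| ≤ |∏ j ∈ s.erase l, x j| := by
  rcases eq_or_ne l m with rfl | hne
  · rfl
  rw [← prod_erase_mul _ _ (mem_erase.2 ⟨hne, hl⟩),
    ← prod_erase_mul _ _ (mem_erase.2 ⟨hne.symm, hm⟩), erase_right_comm, abs_mul, abs_mul]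
  exact mul_le_mul_of_nonneg_left h (abs_nonneg _)

theorem hadamard_gradient_ordering_general (n p : ℕ)
    (f : (Fin n → ℝ) → ℝ) (hf : Differentiable ℝ f)
    (W : Fin p → Fin n → ℝ)
    (F : (Fin p → Fin n → ℝ) → ℝ)
    (hF : ∀ V : Fin p → Fin n → ℝ, F V = f (fun k => ∏ l, V l k)) :
    (∀ (l : Fin p) (k : Fin n),
      fderiv ℝ F W (Pi.single l (Pi.single k 1))
        = fderiv ℝ f (fun k' => ∏ l', W l' k') (Pi.single k 1)
          * ∏ j ∈ univ.erase l, W j k) ∧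
    (∀ (k : Fin n) (l m : Fin p), |W l k| ≤ |W m k| →
      |fderiv ℝ F W (Pi.single m (Pi.single k 1))|
        ≤ |fderiv ℝ F W (Pi.single l (Pi.single k 1))|) ∧
    ((∀ (k : Fin n) (l m : Fin p), l ≤ m → |W l k| ≤ |W m k|) →
      ∀ (k : Fin n) (l m : Fin p), l ≤ m →
        |fderiv ℝ F W (Pi.single m (Pi.single k 1))|
          ≤ |fderiv ℝ F W (Pi.single l (Pi.single k 1))|) := by
  have hFθ : F = f ∘ hadamardProd := funext hF
  have hpartial : ∀ (l : Fin p) (k : Fin n),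
      fderiv ℝ F W (Pi.single l (Pi.single k 1))
        = fderiv ℝ f (fun k' => ∏ l', W l' k') (Pi.single k 1) * ∏ j ∈ univ.erase l, W j k := by
    intro l k
    rw [hFθ, fderiv_comp_hadamardProd_single (hf _), smul_eq_mul, mul_comm]
    rfl
  have hordered : ∀ (k : Fin n) (l m : Fin p), |W l k| ≤ |W m k| →
      |fderiv ℝ F W (Pi.single m (Pi.single k 1))|
        ≤ |fderiv ℝ F W (Pi.single l (Pi.single k 1))| := by
    intro k l m hlm
    rw [hpartial, hpartial, abs_mul, abs_mul]
    exact mul_le_mul_of_nonneg_left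
      (abs_prod_erase_le_of_abs_le (W · k) (mem_univ l) (mem_univ m) hlm) (abs_nonneg _)
  exact ⟨hpartial, hordered, fun hW k l m hlm => hordered k l m (hW k l m hlm)⟩

/-- Gradient ordering for Hadamard overparameterization: for
`F(w_1, …, w_p) = f(θ)` with `θ_k = ∏ l, w_{l,k}`, the partial derivative with respect
to the entry `w_{l,k}` equals `(∂f/∂θ_k)(θ) * ∏_{j ≠ l} w_{j,k}`; consequently,
entries of smaller magnitude receive gradients of larger magnitude, and if the layers
are ordered by magnitude in every coordinate then the gradient magnitudes are ordered
in reverse. -/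
theorem hadamard_gradient_ordering (n p : ℕ) (hn : 1 ≤ n) (hp : 1 ≤ p)
    (f : (Fin n → ℝ) → ℝ) (hf : Differentiable ℝ f)
    (W : Fin p → Fin n → ℝ)
    (F : (Fin p → Fin n → ℝ) → ℝ)
    (hF : ∀ V : Fin p → Fin n → ℝ, F V = f (fun k => ∏ l, V l k)) :
    (∀ (l : Fin p) (k : Fin n),
      fderiv ℝ F W (Pi.single l (Pi.single k 1))
        = fderiv ℝ f (fun k' => ∏ l', W l' k') (Pi.single k 1)
          * ∏ j ∈ univ.erase l, W j k) ∧
    (∀ (k : Fin n) (l m : Fin p), |W l k| ≤ |W m k| →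
      |fderiv ℝ F W (Pi.single m (Pi.single k 1))|
        ≤ |fderiv ℝ F W (Pi.single l (Pi.single k 1))|) ∧
    ((∀ (k : Fin n) (l m : Fin p), l ≤ m → |W l k| ≤ |W m k|) →
      ∀ (k : Fin n) (l m : Fin p), l ≤ m →
        |fderiv ℝ F W (Pi.single m (Pi.single k 1))|
          ≤ |fderiv ℝ F W (Pi.single l (Pi.single k 1))|) :=
  hadamard_gradient_ordering_general n p f hf W F hF
end

section
/- Let f : ℝ^n → ℝ be differentiable and L-smooth with L > 0 (‖∇f(x) − ∇f(y)‖ ≤ L·‖x − y‖ for all x, y), bounded below by f* ∈ ℝ (f(θ) ≥ f* for all θ), and satisfying the Polyak–Łojasiewicz inequality with constant Λ > 0: (1/2)·‖∇f(θ)‖² ≥ Λ·(f(θ) − f*) for all θ ∈ ℝ^n. Let 0 < c ≤ C and for each t ∈ ℕ let z_t ∈ ℝ^n satisfy c ≤ z_{t,k} ≤ C for every coordinate k. Consider the diagonally preconditioned gradient descent iterates θ_{t+1} = θ_t − η·(z_t ⊙ ∇f(θ_t)) with step size 0 < η ≤ 2c/(L·C²). Then for every t ∈ ℕ, f(θ_{t+1})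 − f* ≤ (1 − Λ·η·(2c − η·L·C²))·(f(θ_t) − f*). -/
/-!
Smoothness gives the descent lemma `f (x + v) ≤ f x + ⟪∇f x, v⟫ + L/2 ‖v‖²`. For the step
`v = -η (z ⊙ ∇f x)` the bounds `c ≤ zₖ ≤ C` give `⟪∇f x, z ⊙ ∇f x⟫ ≥ c ‖∇f x‖²` and
`‖z ⊙ ∇f x‖² ≤ C² ‖∇f x‖²`, so one step decreases `f` by at least `η (2c - ηLC²)/2 · ‖∇f x‖²`,
which the PL inequality bounds below by `Λη(2c - ηLC²) (f x - f*)`.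
-/

open scoped RealInnerProductSpace

section LipschitzGradient

variable {F : Type*} [NormedAddCommGroup F] [InnerProductSpace ℝ F] [CompleteSpace F]
  {f : F → ℝ} {L : ℝ}

theorem inner_gradient_add_smul_le_of_lipschitz_gradient
    (hsmooth : ∀ x y, ‖gradient f x - gradient f y‖ ≤ L * ‖x - y‖)
    (x v : F) {t : ℝ} (ht : 0 ≤ t) :
    ⟪gradient f (x + t • v), v⟫ ≤ ⟪gradient f x, v⟫ + L * t * ‖v‖ ^ 2 := by
  have hdiff : ⟪gradient f (x + t • v) - gradient f x, v⟫ ≤ L * t * ‖v‖ ^ 2 :=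
    calc ⟪gradient f (x + t • v) - gradient f x, v⟫
        ≤ ‖gradient f (x + t • v) - gradient f x‖ * ‖v‖ := real_inner_le_norm _ _
      _ ≤ L * ‖t • v‖ * ‖v‖ := by
          gcongr
          simpa using hsmooth (x + t • v) x
      _ = L * t * ‖v‖ ^ 2 := by rw [norm_smul, Real.norm_of_nonneg ht]; ring
  rw [inner_sub_left] at hdiff
  linarith

theorem apply_add_le_of_lipschitz_gradient (hf : Differentiable ℝ f)
    (hsmooth : ∀ x y, ‖gradient f x - gradient f y‖ ≤ L * ‖x - y‖) (x v : F) :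
    f (x + v) ≤ f x + ⟪gradient f x, v⟫ + L / 2 * ‖v‖ ^ 2 := by
  have hline : ∀ t : ℝ,
      HasDerivAt (fun t : ℝ => f (x + t • v)) ⟪gradient f (x + t • v), v⟫ t := by
    intro t
    have hseg : HasDerivAt (fun t : ℝ => x + t • v) v t := by
      simpa using ((hasDerivAt_id t).smul_const v).const_add x
    simpa [Function.comp_def] using
      (hf (x + t • v)).hasGradientAt.hasFDerivAt.comp_hasDerivAt t hseg
  have hbound : ∀ t : ℝ, HasDerivAt
      (fun t : ℝ => f x + t * ⟪gradient f x, v⟫ + L / 2 * t ^ 2 * ‖v‖ ^ 2)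
      (⟪gradient f x, v⟫ + L * t * ‖v‖ ^ 2) t := by
    intro t
    have h := (((hasDerivAt_id t).mul_const ⟪gradient f x, v⟫).const_add (f x)).add
      (((hasDerivAt_pow 2 t).const_mul (L / 2)).mul_const (‖v‖ ^ 2))
    exact h.congr_deriv (by ring)
  have hcompare := image_le_of_deriv_right_le_deriv_boundary (a := 0) (b := 1)
    (fun t _ => (hline t).continuousAt.continuousWithinAt)
    (fun t _ => (hline t).hasDerivWithinAt) (by simp)
    (fun t _ => (hbound t).continuousAt.continuousWithinAt)
    (fun t _ => (hbound t).hasDerivWithinAt)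
    (fun t ht => inner_gradient_add_smul_le_of_lipschitz_gradient hsmooth x v ht.1)
    (Set.right_mem_Icc.2 zero_le_one)
  simpa using hcompare

theorem apply_sub_smul_le_of_lipschitz_gradient (hf : Differentiable ℝ f)
    (hL : 0 ≤ L) (hsmooth : ∀ x y, ‖gradient f x - gradient f y‖ ≤ L * ‖x - y‖)
    {x d : F} {c C η : ℝ} (hη : 0 ≤ η)
    (hcorr : c * ‖gradient f x‖ ^ 2 ≤ ⟪gradient f x, d⟫)
    (hd : ‖d‖ ^ 2 ≤ C ^ 2 * ‖gradient f x‖ ^ 2) :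
    f (x - η • d) ≤ f x - η * (c - η * L * C ^ 2 / 2) * ‖gradient f x‖ ^ 2 := by
  have h := apply_add_le_of_lipschitz_gradient hf hsmooth x (-(η • d))
  rw [← sub_eq_add_neg, inner_neg_right, real_inner_smul_right, norm_neg, norm_smul,
    Real.norm_of_nonneg hη] at h
  have hcorr' := mul_le_mul_of_nonneg_left hcorr hη
  have hd' := mul_le_mul_of_nonneg_left hd (by positivity : 0 ≤ L / 2 * η ^ 2)
  nlinarith

end LipschitzGradient

theorem le_inner_toLp_mul {ι : Type*} [Fintype ι] {c : ℝ} {z : ι → ℝ} (hz : ∀ i, c ≤ z i)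
    (g : EuclideanSpace ℝ ι) : c * ‖g‖ ^ 2 ≤ ⟪g, WithLp.toLp 2 (fun i => z i * g i)⟫ := by
  rw [EuclideanSpace.real_norm_sq_eq, PiLp.inner_apply, Finset.mul_sum]
  refine Finset.sum_le_sum fun i _ => ?_
  simp only [RCLike.inner_apply, conj_trivial]
  rw [mul_assoc, ← sq]
  exact mul_le_mul_of_nonneg_right (hz i) (sq_nonneg _)

theorem norm_toLp_mul_sq_le {ι : Type*} [Fintype ι] {C : ℝ} {z : ι → ℝ} (hz : ∀ i, |z i| ≤ C)
    (g : EuclideanSpace ℝ ι) : ‖WithLp.toLp 2 (fun i => z i * g i)‖ ^ 2 ≤ C ^ 2 * ‖g‖ ^ 2 := by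
  rw [EuclideanSpace.real_norm_sq_eq, EuclideanSpace.real_norm_sq_eq, Finset.mul_sum]
  refine Finset.sum_le_sum fun i _ => ?_
  rw [mul_pow]
  exact mul_le_mul_of_nonneg_right (sq_le_sq' (abs_le.1 (hz i)).1 (abs_le.1 (hz i)).2) (sq_nonneg _)

theorem preconditioned_gd_one_step_contraction_general (n : ℕ)
    (f : EuclideanSpace ℝ (Fin n) → ℝ) (hf : Differentiable ℝ f)
    (L : ℝ) (hL : 0 < L)
    (hsmooth : ∀ x y : EuclideanSpace ℝ (Fin n),
      ‖gradient f x - gradient f y‖ ≤ L * ‖x - y‖)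
    (fstar : ℝ) (Λ : ℝ)
    (hPL : ∀ θ, Λ * (f θ - fstar) ≤ (1 / 2) * ‖gradient f θ‖ ^ 2)
    (c C : ℝ) (hc : 0 < c) (hcC : c ≤ C)
    (z : ℕ → Fin n → ℝ) (hz : ∀ t i, c ≤ z t i ∧ z t i ≤ C)
    (η : ℝ) (hη : 0 < η) (hη2 : η ≤ 2 * c / (L * C ^ 2))
    (θ : ℕ → EuclideanSpace ℝ (Fin n))
    (hstep : ∀ t, θ (t + 1)
      = θ t - η • (WithLp.equiv 2 (Fin n → ℝ)).symm
          (fun i => z t i * gradient f (θ t) i)) :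
    ∀ t, f (θ (t + 1)) - fstar
      ≤ (1 - Λ * η * (2 * c - η * L * C ^ 2)) * (f (θ t) - fstar) := by
  intro t
  have hstepsize : η * L * C ^ 2 ≤ 2 * c := by
    have hC : 0 < C := hc.trans_le hcC
    rwa [le_div_iff₀ (by positivity), ← mul_assoc] at hη2
  have hdecrease : f (θ (t + 1))
      ≤ f (θ t) - η * (c - η * L * C ^ 2 / 2) * ‖gradient f (θ t)‖ ^ 2 := by
    rw [hstep t]
    exact apply_sub_smul_le_of_lipschitz_gradient hf hL.le hsmooth hη.le
      (le_inner_toLp_mul (fun i => (hz t i).1) _)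
      (norm_toLp_mul_sq_le (fun i => abs_le.2 ⟨by linarith [(hz t i).1], (hz t i).2⟩) _)
  have hPL_scaled := mul_le_mul_of_nonneg_left (hPL (θ t))
    (mul_nonneg hη.le (sub_nonneg.2 hstepsize))
  linarith

/-- One-step contraction for diagonally preconditioned gradient descent under `L`-smoothness
and the Polyak–Łojasiewicz inequality: with preconditioner entries in `[c, C]` and step size
`0 < η ≤ 2c/(LC²)`, the suboptimality contracts by the factor `1 - Λη(2c - ηLC²)` at
every step. -/
theorem preconditioned_gd_one_step_contraction (n : ℕ)
    (f : EuclideanSpace ℝ (Fin n) → ℝ) (hf : Differentiable ℝ f)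
    (L : ℝ) (hL : 0 < L)
    (hsmooth : ∀ x y : EuclideanSpace ℝ (Fin n),
      ‖gradient f x - gradient f y‖ ≤ L * ‖x - y‖)
    (fstar : ℝ) (hbdd : ∀ θ, fstar ≤ f θ)
    (Λ : ℝ) (hΛ : 0 < Λ)
    (hPL : ∀ θ, Λ * (f θ - fstar) ≤ (1 / 2) * ‖gradient f θ‖ ^ 2)
    (c C : ℝ) (hc : 0 < c) (hcC : c ≤ C)
    (z : ℕ → Fin n → ℝ) (hz : ∀ t i, c ≤ z t i ∧ z t i ≤ C)
    (η : ℝ) (hη : 0 < η) (hη2 : η ≤ 2 * c / (L * C ^ 2))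
    (θ : ℕ → EuclideanSpace ℝ (Fin n))
    (hstep : ∀ t, θ (t + 1)
      = θ t - η • (WithLp.equiv 2 (Fin n → ℝ)).symm
          (fun i => z t i * gradient f (θ t) i)) :
    ∀ t, f (θ (t + 1)) - fstar
      ≤ (1 - Λ * η * (2 * c - η * L * C ^ 2)) * (f (θ t) - fstar) :=
  preconditioned_gd_one_step_contraction_general n f hf L hL hsmooth fstar Λ hPL c C hc hcC z hz η
    hη hη2 θ hstep
end

section
/- Let f : ℝ^n → ℝ be differentiable and L-smooth with L > 0 (‖∇f(x) − ∇f(y)‖ ≤ L·‖x − y‖ for all x, y), bounded below by f* ∈ ℝ (f(θ) ≥ f* for all θ), and satisfying the Polyak–Łojasiewicz inequality with constant Λ > 0: (1/2)·‖∇f(θ)‖² ≥ Λ·(f(θ) − f*) for all θ ∈ ℝ^n. Let 0 < c ≤ C and for each t ∈ ℕ let z_t ∈ ℝ^n satisfy c ≤ z_{t,k} ≤ C for every coordinate k. Consider the iterates θ_{t+1} = θ_t − η·(z_t ⊙ ∇f(θ_t)) with step size 0 < η ≤ 2c/(L·C²), and set ρ = 1 − Λ·η·(2c − η·L·C²). If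 additionally ρ ≥ 0, then for every T ∈ ℕ, f(θ_T) − f* ≤ ρ^T·(f(θ_0) − f*); i.e., the objective values converge to f* at a geometric (exponential) rate ρ. -/
/-!
With `d = η • (z ⊙ ∇f θ)`, the coordinate bounds `c ≤ z ≤ C` give `⟪∇f θ, d⟫ ≥ ηc‖∇f θ‖²` and
`‖d‖² ≤ η²C²‖∇f θ‖²`, so the descent lemma for `L`-smooth functions yields the sufficient decrease
`f(θ - d) ≤ f θ - (η/2)(2c - ηLC²)‖∇f θ‖²`. The step-size bound makes the coefficient nonnegative,
and the PL inequality turns this decrease into the contraction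
`f(θ_{t+1}) - f* ≤ ρ (f(θ_t) - f*)`, which is iterated.
-/

open RealInnerProductSpace

section Smooth

variable {F : Type*} [NormedAddCommGroup F] [InnerProductSpace ℝ F] [CompleteSpace F]
  {f : F → ℝ} {L : ℝ}

theorem hasDerivAt_comp_add_smul (hf : Differentiable ℝ f) (x v : F) (s : ℝ) :
    HasDerivAt (fun u : ℝ => f (x + u • v)) ⟪gradient f (x + s • v), v⟫ s := by
  have hline : HasDerivAt (fun u : ℝ => x + u • v) v s := by
    simpa using ((hasDerivAt_id s).smul_const v).const_add x
  simpa [Function.comp_def] using (hf _).hasFDerivAt.comp_hasDerivAt s hline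

theorem le_add_inner_gradient_add_sq_of_lipschitz_gradient (hf : Differentiable ℝ f)
    (hs : ∀ x y : F, ‖gradient f x - gradient f y‖ ≤ L * ‖x - y‖) (x y : F) :
    f y ≤ f x + ⟪gradient f x, y - x⟫ + L / 2 * ‖y - x‖ ^ 2 := by
  set v := y - x
  let φ : ℝ → ℝ := fun s => f (x + s • v) - s * ⟪gradient f x, v⟫ - L / 2 * ‖v‖ ^ 2 * s ^ 2
  have hφ : ∀ s, HasDerivAt φ (⟪gradient f (x + s • v), v⟫ - ⟪gradient f x, v⟫
      - L / 2 * ‖v‖ ^ 2 * (2 * s)) s := fun s =>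
    ((hasDerivAt_comp_add_smul hf x v s).sub ((hasDerivAt_id s).mul_const _ |>.congr_deriv
      (one_mul _))).sub ((hasDerivAt_pow 2 s).const_mul _ |>.congr_deriv (by ring))
  have hφ_nonpos : ∀ s ∈ interior (Set.Ici (0 : ℝ)), ⟪gradient f (x + s • v), v⟫
      - ⟪gradient f x, v⟫ - L / 2 * ‖v‖ ^ 2 * (2 * s) ≤ 0 := by
    intro s hs0
    rw [interior_Ici, Set.mem_Ioi] at hs0
    have hlip : ‖gradient f (x + s • v) - gradient f x‖ ≤ L * (s * ‖v‖) := by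
      simpa [norm_smul, abs_of_pos hs0] using hs (x + s • v) x
    refine sub_nonpos.2 ?_
    calc ⟪gradient f (x + s • v), v⟫ - ⟪gradient f x, v⟫
        = ⟪gradient f (x + s • v) - gradient f x, v⟫ := (inner_sub_left _ _ _).symm
      _ ≤ ‖gradient f (x + s • v) - gradient f x‖ * ‖v‖ := real_inner_le_norm _ _
      _ ≤ L * (s * ‖v‖) * ‖v‖ := mul_le_mul_of_nonneg_right hlip (norm_nonneg v)
      _ = L / 2 * ‖v‖ ^ 2 * (2 * s) := by ring
  have hanti : AntitoneOn φ (Set.Ici 0) :=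
    antitoneOn_of_hasDerivWithinAt_nonpos (convex_Ici 0)
      (fun s _ => (hφ s).continuousAt.continuousWithinAt)
      (fun s _ => (hφ s).hasDerivWithinAt) hφ_nonpos
  have h01 : φ 1 ≤ φ 0 := hanti (Set.mem_Ici.2 le_rfl) (Set.mem_Ici.2 zero_le_one) zero_le_one
  have h0 : φ 0 = f x := by simp [φ]
  have h1 : φ 1 = f y - ⟪gradient f x, y - x⟫ - L / 2 * ‖y - x‖ ^ 2 := by simp [φ, v]
  linarith

theorem le_sub_mul_norm_gradient_sq_of_inner_le (hf : Differentiable ℝ f) (hL : 0 ≤ L)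
    (hs : ∀ x y : F, ‖gradient f x - gradient f y‖ ≤ L * ‖x - y‖) {x d : F} {a b : ℝ}
    (hinner : a * ‖gradient f x‖ ^ 2 ≤ ⟪gradient f x, d⟫)
    (hnorm : ‖d‖ ^ 2 ≤ b * ‖gradient f x‖ ^ 2) :
    f (x - d) ≤ f x - (a - L * b / 2) * ‖gradient f x‖ ^ 2 := by
  have hdesc := le_add_inner_gradient_add_sq_of_lipschitz_gradient hf hs x (x - d)
  rw [sub_sub_cancel_left, inner_neg_right, norm_neg] at hdesc
  have := mul_le_mul_of_nonneg_left hnorm (by positivity : 0 ≤ L / 2)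
  linarith

theorem sub_le_mul_sub_of_le_sub_mul_norm_gradient_sq {x y : F} {fstar Λ κ : ℝ} (hκ : 0 ≤ κ)
    (hdec : f y ≤ f x - κ * ‖gradient f x‖ ^ 2)
    (hPL : Λ * (f x - fstar) ≤ 1 / 2 * ‖gradient f x‖ ^ 2) :
    f y - fstar ≤ (1 - 2 * Λ * κ) * (f x - fstar) := by
  nlinarith [mul_le_mul_of_nonneg_left hPL hκ]

end Smooth

section Hadamard

variable {ι : Type*} [Fintype ι] {z : ι → ℝ}

theorem mul_norm_sq_le_inner_hadamard {c : ℝ} (hz : ∀ i, c ≤ z i) (v : EuclideanSpace ℝ ι) :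
    c * ‖v‖ ^ 2 ≤ ⟪v, (WithLp.equiv 2 (ι → ℝ)).symm (fun i => z i * v i)⟫ := by
  rw [EuclideanSpace.real_norm_sq_eq, Finset.mul_sum, PiLp.inner_apply]
  refine Finset.sum_le_sum fun i _ => ?_
  simp only [WithLp.equiv_symm_apply, PiLp.toLp_apply, RCLike.inner_apply, conj_trivial]
  nlinarith [mul_le_mul_of_nonneg_right (hz i) (sq_nonneg (v i))]

theorem norm_hadamard_sq_le {C : ℝ} (hz : ∀ i, |z i| ≤ C) (v : EuclideanSpace ℝ ι) :
    ‖(WithLp.equiv 2 (ι → ℝ)).symm (fun i => z i * v i)‖ ^ 2 ≤ C ^ 2 * ‖v‖ ^ 2 := by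
  rw [EuclideanSpace.real_norm_sq_eq, EuclideanSpace.real_norm_sq_eq, Finset.mul_sum]
  refine Finset.sum_le_sum fun i _ => ?_
  simp only [WithLp.equiv_symm_apply, PiLp.toLp_apply, mul_pow]
  exact mul_le_mul_of_nonneg_right (sq_le_sq' (neg_le_of_abs_le (hz i)) (le_of_abs_le (hz i)))
    (sq_nonneg _)

end Hadamard

theorem preconditioned_gd_exponential_convergence_general (n : ℕ)
    (f : EuclideanSpace ℝ (Fin n) → ℝ) (hf : Differentiable ℝ f)
    (L : ℝ) (hL : 0 < L)
    (hsmooth : ∀ x y : EuclideanSpace ℝ (Fin n),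
      ‖gradient f x - gradient f y‖ ≤ L * ‖x - y‖)
    (fstar : ℝ)
    (Λ : ℝ)
    (hPL : ∀ θ, Λ * (f θ - fstar) ≤ (1 / 2) * ‖gradient f θ‖ ^ 2)
    (c C : ℝ) (hc : 0 < c) (hcC : c ≤ C)
    (z : ℕ → Fin n → ℝ) (hz : ∀ t i, c ≤ z t i ∧ z t i ≤ C)
    (η : ℝ) (hη : 0 < η) (hη2 : η ≤ 2 * c / (L * C ^ 2))
    (θ : ℕ → EuclideanSpace ℝ (Fin n))
    (hstep : ∀ t, θ (t + 1)
      = θ t - η • (WithLp.equiv 2 (Fin n → ℝ)).symm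
          (fun i => z t i * gradient f (θ t) i))
    (ρ : ℝ) (hρ : ρ = 1 - Λ * η * (2 * c - η * L * C ^ 2)) (hρ0 : 0 ≤ ρ) :
    ∀ T : ℕ, f (θ T) - fstar ≤ ρ ^ T * (f (θ 0) - fstar) := by
  have hgap : 0 ≤ 2 * c - η * L * C ^ 2 := by
    have hLC : 0 < L * C ^ 2 := by have := hc.trans_le hcC; positivity
    rw [le_div_iff₀ hLC] at hη2
    linarith
  have hcontract : ∀ t, f (θ (t + 1)) - fstar ≤ ρ * (f (θ t) - fstar) := by
    intro t
    set g := gradient f (θ t)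
    have hinner := mul_le_mul_of_nonneg_left
      (mul_norm_sq_le_inner_hadamard (fun i => (hz t i).1) g) hη.le
    rw [← inner_smul_right, ← mul_assoc] at hinner
    have hnorm : ‖η • (WithLp.equiv 2 (Fin n → ℝ)).symm (fun i => z t i * g i)‖ ^ 2
        ≤ η ^ 2 * C ^ 2 * ‖g‖ ^ 2 := by
      rw [norm_smul, mul_pow, Real.norm_eq_abs, sq_abs, mul_assoc]
      exact mul_le_mul_of_nonneg_left (norm_hadamard_sq_le
        (fun i => abs_le.2 ⟨by linarith [(hz t i).1], (hz t i).2⟩) g) (sq_nonneg η)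
    have hdec := le_sub_mul_norm_gradient_sq_of_inner_le hf hL.le hsmooth hinner hnorm
    rw [← hstep t] at hdec
    have hκ : η * c - L * (η ^ 2 * C ^ 2) / 2 = η / 2 * (2 * c - η * L * C ^ 2) := by ring
    rw [hκ] at hdec
    convert sub_le_mul_sub_of_le_sub_mul_norm_gradient_sq (by positivity) hdec (hPL (θ t))
      using 2
    rw [hρ]; ring
  exact fun T => le_geom (u := fun t => f (θ t) - fstar) hρ0 T fun t _ => hcontract t

/-- Exponential convergence of diagonally preconditioned gradient descent under
`L`-smoothness and the Polyak–Łojasiewicz inequality: with preconditioner entries in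
`[c, C]`, step size `0 < η ≤ 2c/(LC²)` and rate `ρ = 1 - Λη(2c - ηLC²) ≥ 0`, the
objective values converge geometrically: `f(θ_T) - f* ≤ ρ^T * (f(θ_0) - f*)`. -/
theorem preconditioned_gd_exponential_convergence (n : ℕ)
    (f : EuclideanSpace ℝ (Fin n) → ℝ) (hf : Differentiable ℝ f)
    (L : ℝ) (hL : 0 < L)
    (hsmooth : ∀ x y : EuclideanSpace ℝ (Fin n),
      ‖gradient f x - gradient f y‖ ≤ L * ‖x - y‖)
    (fstar : ℝ) (hbdd : ∀ θ, fstar ≤ f θ)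
    (Λ : ℝ) (hΛ : 0 < Λ)
    (hPL : ∀ θ, Λ * (f θ - fstar) ≤ (1 / 2) * ‖gradient f θ‖ ^ 2)
    (c C : ℝ) (hc : 0 < c) (hcC : c ≤ C)
    (z : ℕ → Fin n → ℝ) (hz : ∀ t i, c ≤ z t i ∧ z t i ≤ C)
    (η : ℝ) (hη : 0 < η) (hη2 : η ≤ 2 * c / (L * C ^ 2))
    (θ : ℕ → EuclideanSpace ℝ (Fin n))
    (hstep : ∀ t, θ (t + 1)
      = θ t - η • (WithLp.equiv 2 (Fin n → ℝ)).symm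
          (fun i => z t i * gradient f (θ t) i))
    (ρ : ℝ) (hρ : ρ = 1 - Λ * η * (2 * c - η * L * C ^ 2)) (hρ0 : 0 ≤ ρ) :
    ∀ T : ℕ, f (θ T) - fstar ≤ ρ ^ T * (f (θ 0) - fstar) :=
  preconditioned_gd_exponential_convergence_general n f hf L hL hsmooth fstar Λ hPL c C hc hcC z hz
    η hη hη2 θ hstep ρ hρ hρ0
end
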